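/- arXiv:math/0612093 — 4 statements merged into one kernel-verified Lean document; each statement's English description precedes it below -/
import Mathlib

section
/- For any real number a > 0, the exponential integral satisfies ∫_a^∞ e^{-t}/t dt = -γ - ln a - Σ_{l=1}^∞ (-a)^l/(l!·l), where γ is the Euler–Mascheroni constant. -/
open Real MeasureTheory Set Filter Topology

namespace ExpIntAux

noncomputable def S (x : ℝ) : ℝ := ∑' l : ℕ, (-x) ^ (l + 1) / ((l + 1).factorial * (l + 1))

lemma term_hasDerivAt (l : ℕ) (x : ℝ) :
    HasDerivAt (fun y : ℝ => (-y) ^ (l + 1) / ((l + 1).factorial * (l + 1)))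
      (-((-x) ^ l / (l + 1).factorial)) x := by
  have h1 : HasDerivAt (fun y : ℝ => (-y) ^ (l + 1)) (((l + 1 : ℕ) : ℝ) * (-x) ^ l * (-1)) x := by
    have := (hasDerivAt_pow (l + 1) (-x)).comp x (hasDerivAt_neg x)
    simpa [Function.comp_def] using this
  have h2 := h1.div_const (((l + 1).factorial * (l + 1) : ℕ) : ℝ)
  have hfac : ((l + 1).factorial : ℝ) ≠ 0 := by positivity
  have hl1 : ((l + 1 : ℕ) : ℝ) ≠ 0 := by positivity
  have hcast : (((l + 1).factorial * (l + 1) : ℕ) : ℝ) =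
      ((l + 1).factorial : ℝ) * ((l + 1 : ℕ) : ℝ) := by push_cast; ring
  rw [hcast] at h2
  have h4 : (((l + 1 : ℕ)) : ℝ) * (-x) ^ l * -1 /
      (((l + 1).factorial : ℝ) * ((l + 1 : ℕ) : ℝ)) =
      -((-x) ^ l / ((l + 1).factorial : ℝ)) := by
    field_simp
  rw [h4] at h2
  refine h2.congr_of_eventuallyEq (Filter.Eventually.of_forall fun y => ?_)
  push_cast
  ring

lemma S_hasDerivAt (x : ℝ) :
    HasDerivAt S (∑' l : ℕ, -((-x) ^ l / (l + 1).factorial)) x := by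
  set R : ℝ := |x| + 1 with hR
  have hRpos : 0 < R := by positivity
  have hx : x ∈ Ioo (-R) R := by
    constructor <;> cases' abs_lt.mp (show |x| < R by simp [hR]) with h1 h2 <;> linarith
  have h0 : (0:ℝ) ∈ Ioo (-R) R := by constructor <;> simp [hRpos] <;> linarith
  refine hasDerivAt_tsum_of_isPreconnected
    (u := fun l : ℕ => R ^ l / l.factorial)
    (Real.summable_pow_div_factorial R) isOpen_Ioo (convex_Ioo _ _).isPreconnected
    (fun l y _ => term_hasDerivAt l y) (fun l y hy => ?_) h0 ?_ hx
  · have hyR : |y| ≤ R := by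
      rw [abs_le]; exact ⟨hy.1.le, hy.2.le⟩
    have h1 : ‖-((-y) ^ l / ((l + 1).factorial : ℝ))‖ = |y| ^ l / (l + 1).factorial := by
      rw [norm_neg, norm_div]
      simp [abs_pow, abs_neg, Nat.abs_cast]
    rw [h1]
    have h3 : (l.factorial : ℝ) ≤ ((l + 1).factorial : ℝ) := by
      exact_mod_cast Nat.factorial_le (Nat.le_succ l)
    calc |y| ^ l / ((l + 1).factorial : ℝ) ≤ R ^ l / ((l + 1).factorial : ℝ) := by
          gcongr
      _ ≤ R ^ l / (l.factorial : ℝ) := by gcongr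
  · apply Summable.congr summable_zero
    intro l
    simp
lemma S_zero : S 0 = 0 := by
  unfold S
  simp

lemma tsum_S_deriv {x : ℝ} (hx : x ≠ 0) :
    (∑' l : ℕ, -((-x) ^ l / ((l + 1).factorial : ℝ))) = (Real.exp (-x) - 1) / x := by
  have hsum : Summable (fun n : ℕ => (-x) ^ n / (n.factorial : ℝ)) :=
    Real.summable_pow_div_factorial (-x)
  have hexp : Real.exp (-x) = ∑' n : ℕ, (-x) ^ n / (n.factorial : ℝ) := by
    rw [Real.exp_eq_exp_ℝ, NormedSpace.exp_eq_tsum_div]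
  have hshift : (∑' n : ℕ, (-x) ^ n / (n.factorial : ℝ))
      = 1 + ∑' l : ℕ, (-x) ^ (l + 1) / ((l + 1).factorial : ℝ) := by
    rw [Summable.tsum_eq_zero_add hsum]
    simp
  have hmul : (∑' l : ℕ, (-x) ^ (l + 1) / ((l + 1).factorial : ℝ))
      = x * ∑' l : ℕ, -((-x) ^ l / ((l + 1).factorial : ℝ)) := by
    rw [← tsum_mul_left]
    congr 1
    funext l
    rw [pow_succ]
    ring
  have key : Real.exp (-x) - 1 = x * ∑' l : ℕ, -((-x) ^ l / ((l + 1).factorial : ℝ)) := by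
    rw [hexp, hshift, ← hmul]; ring
  rw [eq_div_iff hx, mul_comm]
  linarith [key]



lemma integrableOn_exp_div {a : ℝ} (ha : 0 < a) :
    IntegrableOn (fun t : ℝ => Real.exp (-t) / t) (Ioi a) := by
  have hexp : IntegrableOn (fun t : ℝ => Real.exp (-t)) (Ioi a) := by
    simpa using exp_neg_integrableOn_Ioi a one_pos
  refine Integrable.mono' (hexp.div_const a) ?_ ?_
  · refine (ContinuousOn.aestronglyMeasurable ?_ measurableSet_Ioi)
    exact ((continuous_exp.comp continuous_neg).continuousOn).div continuousOn_id
      fun t ht => (ha.trans ht).ne'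
  · filter_upwards [ae_restrict_mem measurableSet_Ioi] with t ht
    have ht0 : 0 < t := ha.trans ht
    rw [Real.norm_eq_abs, abs_div, abs_of_pos (Real.exp_pos _), abs_of_pos ht0]
    gcongr
    exact le_of_lt ht

lemma integrableOn_exp_mul {a : ℝ} (ha : 0 < a) :
    IntegrableOn (fun t : ℝ => Real.exp (-t) * t) (Ioi a) := by
  have := Real.GammaIntegral_convergent (s := 2) (by norm_num)
  have h2 : IntegrableOn (fun t : ℝ => Real.exp (-t) * t) (Ioi 0) := by
    apply this.congr_fun ?_ measurableSet_Ioi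
    intro t ht
    rw [show (2:ℝ) - 1 = 1 by norm_num]; simp [Real.rpow_one]
  exact h2.mono_set (Ioi_subset_Ioi ha.le)

lemma hasDerivAt_E1 {a : ℝ} (ha : 0 < a) :
    HasDerivAt (fun x => ∫ t in Ioi x, Real.exp (-t) / t) (-(Real.exp (-a) / a)) a := by
  set f : ℝ → ℝ := fun t => Real.exp (-t) / t with hf
  have hmeas : StronglyMeasurable f :=
    ((measurable_exp.comp measurable_neg).div measurable_id).stronglyMeasurable
  have hcont : ContinuousAt f a := by
    apply ContinuousAt.div
    · exact (continuous_exp.comp continuous_neg).continuousAt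
    · exact continuousAt_id
    · exact ha.ne'
  have hFTC : HasDerivAt (fun x => ∫ t in a..x, f t) (f a) a :=
    intervalIntegral.integral_hasDerivAt_right (by simp)
      hmeas.stronglyMeasurableAtFilter hcont
  have hkey : ∀ x ∈ Ioi (0:ℝ), (∫ t in Ioi x, f t) = (∫ t in Ioi a, f t) - ∫ t in a..x, f t := by
    intro x hx
    rcases le_or_gt a x with h | h
    · rw [intervalIntegral.integral_of_le h, eq_sub_iff_add_eq, add_comm,
        ← setIntegral_union (Ioc_disjoint_Ioi le_rfl) measurableSet_Ioi
          ((integrableOn_exp_div ha).mono_set Ioc_subset_Ioi_self)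
          (integrableOn_exp_div (lt_of_lt_of_le ha h)), Ioc_union_Ioi_eq_Ioi h]
    · rw [intervalIntegral.integral_symm, intervalIntegral.integral_of_le h.le, sub_neg_eq_add,
        add_comm, ← setIntegral_union (Ioc_disjoint_Ioi le_rfl) measurableSet_Ioi
          ((integrableOn_exp_div hx).mono_set Ioc_subset_Ioi_self)
          (integrableOn_exp_div ha), Ioc_union_Ioi_eq_Ioi h.le]
  have heq : (fun x => ∫ t in Ioi x, f t) =ᶠ[𝓝 a]
      (fun x => (∫ t in Ioi a, f t) - ∫ t in a..x, f t) := by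
    filter_upwards [Ioi_mem_nhds ha] with x hx using hkey x hx
  have : HasDerivAt (fun x => (∫ t in Ioi a, f t) - ∫ t in a..x, f t) (-(f a)) a :=
    hFTC.const_sub _
  exact this.congr_of_eventuallyEq heq



lemma mellin_pair :
    MellinConvergent (fun t => Real.log t • ((Real.exp (-t) : ℝ) : ℂ)) 1 ∧
      HasDerivAt (mellin fun t => ((Real.exp (-t) : ℝ) : ℂ))
        (mellin (fun t => Real.log t • ((Real.exp (-t) : ℝ) : ℂ)) 1) 1 := by
  refine mellin_hasDerivAt_of_isBigO_rpow (a := 2) (b := 0) ?_ ?_ (by norm_num) ?_ (by norm_num)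
  · refine (Continuous.continuousOn ?_).locallyIntegrableOn measurableSet_Ioi
    exact Complex.continuous_ofReal.comp (Real.continuous_exp.comp continuous_neg)
  · rw [← Asymptotics.isBigO_norm_left]
    simp_rw [Complex.norm_real,
      Asymptotics.isBigO_norm_left]
    simpa only [neg_one_mul] using
      (isLittleO_exp_neg_mul_rpow_atTop zero_lt_one _).isBigO
  · simp_rw [neg_zero, Real.rpow_zero]
    refine Asymptotics.isBigO_const_of_tendsto (?_ : Tendsto _ _ (𝓝 (1 : ℂ))) one_ne_zero
    rw [(by simp : (1 : ℂ) = Real.exp (-0))]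
    exact (Complex.continuous_ofReal.comp
      (Real.continuous_exp.comp continuous_neg)).continuousWithinAt

lemma integrableOn_exp_log : IntegrableOn (fun t : ℝ => Real.exp (-t) * Real.log t) (Ioi 0) := by
  have h := mellin_pair.1
  unfold MellinConvergent at h
  have h2 : IntegrableOn (fun t : ℝ => ((Real.exp (-t) * Real.log t : ℝ) : ℂ)) (Ioi 0) := by
    apply h.congr_fun ?_ measurableSet_Ioi
    intro t ht
    simp only [sub_self, Complex.cpow_zero, one_smul, Complex.real_smul]
    push_cast
    ring
  have h3 := h2.re
  exact h3

lemma integral_exp_log : (∫ t in Ioi (0:ℝ), Real.exp (-t) * Real.log t)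
    = -Real.eulerMascheroniConstant := by
  have hder := mellin_pair.2
  rw [← Complex.GammaIntegral_eq_mellin] at hder
  have hI : mellin (fun t => Real.log t • ((Real.exp (-t) : ℝ) : ℂ)) 1
      = ((∫ t in Ioi (0:ℝ), Real.exp (-t) * Real.log t : ℝ) : ℂ) := by
    unfold mellin
    calc (∫ t : ℝ in Ioi 0, (t : ℂ) ^ ((1:ℂ) - 1) • (Real.log t • ((Real.exp (-t) : ℝ) : ℂ)))
        = ∫ t : ℝ in Ioi 0, ((Real.exp (-t) * Real.log t : ℝ) : ℂ) := by
          apply setIntegral_congr_fun measurableSet_Ioi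
          intro t ht
          simp only [sub_self, Complex.cpow_zero, one_smul, Complex.real_smul]
          push_cast
          ring
      _ = ((∫ t in Ioi (0:ℝ), Real.exp (-t) * Real.log t : ℝ) : ℂ) := integral_ofReal
  rw [hI] at hder
  have hG : HasDerivAt Complex.Gamma
      ((∫ t in Ioi (0:ℝ), Real.exp (-t) * Real.log t : ℝ) : ℂ) 1 := by
    apply hder.congr_of_eventuallyEq
    have hmem : {s : ℂ | 0 < s.re} ∈ 𝓝 (1 : ℂ) := by
      refine (isOpen_lt continuous_const Complex.continuous_re).mem_nhds ?_
      simp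
    filter_upwards [hmem] with s hs
    exact Complex.Gamma_eq_integral hs
  have hR : HasDerivAt Real.Gamma (∫ t in Ioi (0:ℝ), Real.exp (-t) * Real.log t) 1 := by
    have h2 := hG.real_of_complex
    simp only [Complex.ofReal_re] at h2
    have hfun : (fun x : ℝ => (Complex.Gamma ↑x).re) = Real.Gamma := by
      funext x
      rw [Complex.Gamma_ofReal, Complex.ofReal_re]
    rwa [hfun] at h2
  exact hR.unique Real.hasDerivAt_Gamma_one


lemma tendsto_negexp_log_atTop :
    Tendsto (fun t : ℝ => -Real.exp (-t) * Real.log t) atTop (𝓝 0) := by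
  have hg : Tendsto (fun t : ℝ => t * Real.exp (-t)) atTop (𝓝 0) := by
    simpa [pow_one] using Real.tendsto_pow_mul_exp_neg_atTop_nhds_zero 1
  have hbound : ∀ᶠ t : ℝ in atTop, ‖-Real.exp (-t) * Real.log t‖ ≤ t * Real.exp (-t) := by
    filter_upwards [eventually_ge_atTop (1:ℝ)] with t ht
    have ht0 : (0:ℝ) < t := lt_of_lt_of_le one_pos ht
    rw [norm_eq_abs, abs_mul, abs_neg, abs_of_pos (exp_pos _),
      abs_of_nonneg (Real.log_nonneg ht), mul_comm]
    gcongr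
    exact Real.log_le_self ht0.le
  exact squeeze_zero_norm' hbound hg

lemma E1_eq_parts {x : ℝ} (hx : 0 < x) :
    (∫ t in Ioi x, Real.exp (-t) / t)
      = (∫ t in Ioi x, Real.exp (-t) * Real.log t) - Real.exp (-x) * Real.log x := by
  have hu : ∀ t ∈ Ioi x, HasDerivAt (fun t : ℝ => -Real.exp (-t)) (Real.exp (-t)) t := by
    intro t _
    have h := ((Real.hasDerivAt_exp (-t)).comp t (hasDerivAt_neg t)).neg
    simpa [Function.comp_def, Pi.neg_def] using h
  have hv : ∀ t ∈ Ioi x, HasDerivAt Real.log t⁻¹ t := fun t ht =>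
    Real.hasDerivAt_log (hx.trans ht).ne'
  have hA : IntegrableOn (fun t : ℝ => Real.exp (-t) * Real.log t) (Ioi x) :=
    integrableOn_exp_log.mono_set (Ioi_subset_Ioi hx.le)
  have hB : IntegrableOn (fun t : ℝ => -Real.exp (-t) * t⁻¹) (Ioi x) := by
    apply IntegrableOn.congr_fun (integrableOn_exp_div hx).neg ?_ measurableSet_Ioi
    intro t _
    show -(Real.exp (-t) / t) = -Real.exp (-t) * t⁻¹
    rw [div_eq_mul_inv]
    ring
  have huv : IntegrableOn ((fun t : ℝ => Real.exp (-t)) * Real.log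
      + (fun t : ℝ => -Real.exp (-t)) * fun t : ℝ => t⁻¹) (Ioi x) := by
    apply IntegrableOn.congr_fun (hA.add hB) ?_ measurableSet_Ioi
    intro t _
    simp [Pi.add_apply, Pi.mul_apply]
  have h_zero : Tendsto ((fun t : ℝ => -Real.exp (-t)) * Real.log) (𝓝[>] x)
      (𝓝 (-Real.exp (-x) * Real.log x)) := by
    have hc : ContinuousAt (fun t : ℝ => -Real.exp (-t) * Real.log t) x :=
      ((Real.continuous_exp.comp continuous_neg).neg.continuousAt).mul
        (Real.continuousAt_log hx.ne')
    exact (hc.continuousWithinAt).tendsto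
  have h_infty : Tendsto ((fun t : ℝ => -Real.exp (-t)) * Real.log) atTop (𝓝 0) :=
    tendsto_negexp_log_atTop
  have h := integral_Ioi_deriv_mul_eq_sub hu hv huv h_zero h_infty
  -- h : ∫ t in Ioi x, exp (-t) * log t + -exp (-t) * t⁻¹ = 0 - (-exp (-x) * log x)
  have hsplit : (∫ t in Ioi x, (Real.exp (-t) * Real.log t + -Real.exp (-t) * t⁻¹))
      = (∫ t in Ioi x, Real.exp (-t) * Real.log t) - ∫ t in Ioi x, Real.exp (-t) / t := by
    rw [← integral_sub hA (integrableOn_exp_div hx)]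
    apply setIntegral_congr_fun measurableSet_Ioi
    intro t _
    show Real.exp (-t) * Real.log t + -Real.exp (-t) * t⁻¹
      = Real.exp (-t) * Real.log t - Real.exp (-t) / t
    rw [div_eq_mul_inv]
    ring
  rw [hsplit] at h
  linarith [h]

lemma tendsto_Phi : Tendsto (fun a : ℝ => ∫ t in Ioi a, Real.exp (-t) * Real.log t) (𝓝[>] (0:ℝ))
    (𝓝 (∫ t in Ioi (0:ℝ), Real.exp (-t) * Real.log t)) := by
  set f : ℝ → ℝ := fun t => Real.exp (-t) * Real.log t with hf
  have hint : IntervalIntegrable f volume (min 0 0) (max 0 1) := by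
    rw [min_self, max_eq_right zero_le_one]
    rw [intervalIntegrable_iff_integrableOn_Ioc_of_le zero_le_one]
    exact integrableOn_exp_log.mono_set Ioc_subset_Ioi_self
  have hcont : ContinuousWithinAt (fun b => ∫ x in (0:ℝ)..b, f x) (Icc 0 1) 0 :=
    intervalIntegral.continuousWithinAt_primitive (measure_singleton 0) hint
  have h0 : (∫ x in (0:ℝ)..(0:ℝ), f x) = 0 := intervalIntegral.integral_same
  have htend : Tendsto (fun b => ∫ x in (0:ℝ)..b, f x) (𝓝[>] (0:ℝ)) (𝓝 0) := by
    have h1 : Tendsto (fun b => ∫ x in (0:ℝ)..b, f x) (𝓝[Icc 0 1] (0:ℝ))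
        (𝓝 (∫ x in (0:ℝ)..(0:ℝ), f x)) := hcont
    rw [h0] at h1
    refine h1.mono_left ?_
    rw [← nhdsWithin_Ioo_eq_nhdsGT one_pos]
    exact nhdsWithin_mono _ Ioo_subset_Icc_self
  have heq : (fun a : ℝ => ∫ t in Ioi a, f t)
      =ᶠ[𝓝[>] (0:ℝ)] fun a : ℝ => (∫ t in Ioi (0:ℝ), f t) - ∫ x in (0:ℝ)..a, f x := by
    filter_upwards [self_mem_nhdsWithin] with a (ha : 0 < a)
    rw [intervalIntegral.integral_of_le ha.le, eq_sub_iff_add_eq, add_comm,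
      ← setIntegral_union (Ioc_disjoint_Ioi le_rfl) measurableSet_Ioi
        (integrableOn_exp_log.mono_set Ioc_subset_Ioi_self)
        (integrableOn_exp_log.mono_set (Ioi_subset_Ioi ha.le)),
      Ioc_union_Ioi_eq_Ioi ha.le]
  have := (tendsto_const_nhds (x := ∫ t in Ioi (0:ℝ), f t)
    (f := 𝓝[>] (0:ℝ))).sub htend
  rw [sub_zero] at this
  exact Tendsto.congr' heq.symm this


end ExpIntAux

open ExpIntAux in
theorem integral_exp_neg_div_Ioi (a : ℝ) (ha : 0 < a) :
    ∫ t in Set.Ioi a, Real.exp (-t) / t =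
      -Real.eulerMascheroniConstant - Real.log a -
        ∑' l : ℕ, (-a) ^ (l + 1) / ((l + 1).factorial * (l + 1)) := by
  set H : ℝ → ℝ := fun x => (∫ t in Ioi x, Real.exp (-t) / t) + Real.log x + S x with hH
  have hHder : ∀ x, 0 < x → HasDerivAt H 0 x := by
    intro x hx
    have h1 := hasDerivAt_E1 hx
    have h2 := Real.hasDerivAt_log hx.ne'
    have h3 : HasDerivAt S ((Real.exp (-x) - 1) / x) x := by
      have := S_hasDerivAt x
      rwa [tsum_S_deriv hx.ne'] at this
    have h := (h1.add h2).add h3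
    have hval : -(Real.exp (-x) / x) + x⁻¹ + (Real.exp (-x) - 1) / x = 0 := by
      field_simp
      ring
    rwa [hval] at h
  have hconst : ∀ x, 0 < x → x ≤ a → H x = H a := by
    intro x hx hxa
    have hderiv : ∀ y ∈ Set.uIcc x a, HasDerivAt H 0 y := by
      intro y hy
      rw [Set.uIcc_of_le hxa] at hy
      exact hHder y (lt_of_lt_of_le hx hy.1)
    have hint : IntervalIntegrable (fun _ : ℝ => (0:ℝ)) volume x a :=
      intervalIntegrable_const
    have := intervalIntegral.integral_eq_sub_of_hasDerivAt hderiv hint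
    simp only [intervalIntegral.integral_const, smul_zero] at this
    linarith [this]
  have hlimS : Tendsto S (𝓝[>] (0:ℝ)) (𝓝 0) := by
    have h2 : Tendsto S (𝓝[>] (0:ℝ)) (𝓝 (S 0)) :=
      (S_hasDerivAt 0).continuousAt.continuousWithinAt (s := Ioi (0:ℝ))
    rwa [S_zero] at h2
  have hlimmid : Tendsto (fun x : ℝ => (1 - Real.exp (-x)) * Real.log x) (𝓝[>] (0:ℝ)) (𝓝 0) := by
    have hg : Tendsto (fun x : ℝ => |Real.log x * x|) (𝓝[>] (0:ℝ)) (𝓝 0) := by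
      have := (tendsto_log_mul_rpow_nhdsGT_zero one_pos).abs
      simp only [abs_zero] at this
      refine this.congr fun x => ?_
      rw [Real.rpow_one]
    have hbound : ∀ᶠ x : ℝ in 𝓝[>] (0:ℝ),
        ‖(1 - Real.exp (-x)) * Real.log x‖ ≤ |Real.log x * x| := by
      filter_upwards [Ioo_mem_nhdsGT_of_mem (Set.mem_Ico.2 ⟨le_refl (0:ℝ), one_pos⟩)]
        with x hx
      obtain ⟨hx0, hx1⟩ := hx
      have h1 : 0 ≤ 1 - Real.exp (-x) := by
        have := Real.exp_le_one_iff.2 (by linarith : -x ≤ 0)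
        linarith
      have h2 : 1 - Real.exp (-x) ≤ x := by
        have := Real.add_one_le_exp (-x)
        linarith
      rw [norm_eq_abs, abs_mul, abs_mul, abs_of_nonneg h1]
      have h3 : (1 - Real.exp (-x)) * |Real.log x| ≤ x * |Real.log x| :=
        mul_le_mul_of_nonneg_right h2 (abs_nonneg _)
      have h4 : x * |Real.log x| = |Real.log x| * |x| := by
        rw [abs_of_pos hx0]; ring
      linarith
    exact squeeze_zero_norm' hbound hg
  have hlim : Tendsto H (𝓝[>] (0:ℝ)) (𝓝 (-Real.eulerMascheroniConstant)) := by
    have heq : H =ᶠ[𝓝[>] (0:ℝ)] fun x =>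
        (∫ t in Ioi x, Real.exp (-t) * Real.log t)
          + (1 - Real.exp (-x)) * Real.log x + S x := by
      filter_upwards [self_mem_nhdsWithin] with x (hx : 0 < x)
      rw [hH]
      simp only
      rw [E1_eq_parts hx]
      ring
    have h1 : Tendsto (fun x : ℝ =>
        (∫ t in Ioi x, Real.exp (-t) * Real.log t)
          + (1 - Real.exp (-x)) * Real.log x + S x) (𝓝[>] (0:ℝ))
        (𝓝 ((∫ t in Ioi (0:ℝ), Real.exp (-t) * Real.log t) + 0 + 0)) :=
      (tendsto_Phi.add hlimmid).add hlimS
    rw [add_zero, add_zero, integral_exp_log] at h1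
    exact Tendsto.congr' heq.symm h1
  have hlim2 : Tendsto H (𝓝[>] (0:ℝ)) (𝓝 (H a)) := by
    refine Tendsto.congr' ?_ tendsto_const_nhds
    filter_upwards [Ioo_mem_nhdsGT_of_mem (Set.mem_Ico.2 ⟨le_refl (0:ℝ), ha⟩)] with x hx
    exact (hconst x hx.1 hx.2.le).symm
  have hHa : H a = -Real.eulerMascheroniConstant := tendsto_nhds_unique hlim2 hlim
  have hSa : S a = ∑' l : ℕ, (-a) ^ (l + 1) / ((l + 1).factorial * (l + 1)) := rfl
  rw [hH] at hHa
  simp only at hHa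
  rw [← hSa]
  linarith [hHa]
end

section
/- Fix 0 < q < 1. For a nonnegative integer t, Re(ε) < 0, and a positive integer i, define ξ_i(t; ε) = Σ_{k > i} q^{-k(t+1)} [k]^t exp(ε[k]/q^k). Then ξ_i(t; ε) = Σ_{j=0}^t C(t,j) ([i]^j exp(ε[i]/q^i)/q^{i(j+1)}) (d/dε)^{t-j} Z_q(0; ε/q^i), where Z_q(0; ε) = Σ_{k>0} q^{-k} exp(ε[k]/q^k). -/
open Real Complex

/-- The q-number `[r] = (1 - q^r)/(1 - q)`. -/
noncomputable def qNum (q r : ℝ) : ℝ := (1 - q ^ r) / (1 - q)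

/-- The regularized series `Z_q(0; ε) = Σ_{k≥1} exp(ε[k]/q^k)/q^k`. -/
noncomputable def Zq0 (q : ℝ) (ε : ℂ) : ℂ :=
  ∑' k : ℕ, ((1 / q ^ (k + 1) : ℝ) : ℂ) *
    Complex.exp (ε * ((qNum q ((k : ℝ) + 1) / q ^ (k + 1) : ℝ) : ℂ))



noncomputable def ckR (q : ℝ) (i k : ℕ) : ℝ := qNum q ((k : ℝ) + 1) / q ^ (k + 1 + i)

noncomputable def termG (q : ℝ) (i m k : ℕ) (z : ℂ) : ℂ :=
  ((1 / q ^ (k + 1) : ℝ) : ℂ) * ((ckR q i k : ℝ) : ℂ) ^ m *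
    Complex.exp (z * ((ckR q i k : ℝ) : ℂ))

section aux
variable {q : ℝ} (hq0 : 0 < q) (hq1 : q < 1) (i : ℕ)

lemma qNum_cast (n : ℕ) : qNum q (n : ℝ) = (1 - q ^ n) / (1 - q) := by
  rw [qNum, Real.rpow_natCast]

include hq0 hq1 in
lemma qNum_ge_one (n : ℕ) (hn : 1 ≤ n) : 1 ≤ qNum q (n : ℝ) := by
  rw [qNum_cast]
  rw [le_div_iff₀ (by linarith)]
  have : q ^ n ≤ q ^ 1 := pow_le_pow_of_le_one hq0.le hq1.le hn
  simpa using by linarith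

include hq0 hq1 in
lemma ckR_ge (k : ℕ) : (1 / q) ^ (k + 1 + i) ≤ ckR q i k := by
  rw [ckR, div_pow, one_pow, div_le_div_iff₀ (by positivity) (by positivity)]
  have h1 : 1 ≤ qNum q ((k : ℝ) + 1) := by
    have := qNum_ge_one hq0 hq1 (k + 1) (by omega)
    push_cast at this ⊢; linarith
  nlinarith [pow_pos hq0 (k + 1 + i)]

include hq0 hq1 in
lemma ckR_pos (k : ℕ) : 0 < ckR q i k := by
  have := ckR_ge hq0 hq1 i k
  have : (0:ℝ) < (1/q) ^ (k+1+i) := by positivity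
  linarith [ckR_ge hq0 hq1 i k]

end aux

section aux2
variable {q : ℝ} (hq0 : 0 < q) (hq1 : q < 1) (i : ℕ)
include hq0 hq1

set_option maxHeartbeats 1000000 in
lemma summable_bound (m : ℕ) {δ : ℝ} (hδ : 0 < δ) :
    Summable (fun k => 1 / q ^ (k + 1) * (ckR q i k) ^ m * Real.exp (-(δ * ckR q i k))) := by
  set n := m + 2 with hn
  set C := ((Nat.factorial n : ℝ) / δ ^ n) * q ^ (2 * i + 1) with hC
  refine Summable.of_nonneg_of_le (f := fun k => C * q ^ k)
    (fun k => mul_nonneg (mul_nonneg (by positivity)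
      (pow_nonneg (ckR_pos hq0 hq1 i k).le m)) (Real.exp_nonneg _)) (fun k => ?_) ((summable_geometric_of_lt_one hq0.le hq1).mul_left C)
  set c := ckR q i k with hc
  have hcpos := ckR_pos hq0 hq1 i k
  have hcg := ckR_ge hq0 hq1 i k
  have h1 : Real.exp (-(δ * c)) ≤ (Nat.factorial n : ℝ) / (δ * c) ^ n := by
    have h := Real.pow_div_factorial_le_exp (x := δ * c) (mul_nonneg hδ.le hcpos.le) n
    rw [Real.exp_neg]
    calc (Real.exp (δ * c))⁻¹ ≤ ((δ * c) ^ n / (Nat.factorial n : ℝ))⁻¹ :=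
          inv_anti₀ (by positivity) h
      _ = (Nat.factorial n : ℝ) / (δ * c) ^ n := by rw [inv_div]
  have h3 : 1 / c ^ 2 ≤ q ^ (2 * (k + 1 + i)) := by
    rw [div_le_iff₀ (by positivity)]
    have ha : (0:ℝ) < q ^ (k + 1 + i) := by positivity
    have hac : 1 ≤ q ^ (k + 1 + i) * c := by
      have : (1 / q) ^ (k + 1 + i) * q ^ (k + 1 + i) = 1 := by
        rw [div_pow, one_pow]; field_simp
      nlinarith
    have h2q : q ^ (2 * (k + 1 + i)) = (q ^ (k + 1 + i)) ^ 2 := by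
      rw [← pow_mul]; ring_nf
    rw [h2q]; nlinarith
  calc 1 / q ^ (k + 1) * c ^ m * Real.exp (-(δ * c))
      ≤ 1 / q ^ (k + 1) * c ^ m * ((Nat.factorial n : ℝ) / (δ * c) ^ n) := by
        apply mul_le_mul_of_nonneg_left h1 (by positivity)
    _ = ((Nat.factorial n : ℝ) / δ ^ n) * (1 / q ^ (k + 1) * (1 / c ^ 2)) := by
        rw [mul_pow, hn, pow_add]
        have hc0 : c ≠ 0 := hcpos.ne'
        field_simp
        ring
    _ ≤ ((Nat.factorial n : ℝ) / δ ^ n) * (1 / q ^ (k + 1) * q ^ (2 * (k + 1 + i))) := by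
        apply mul_le_mul_of_nonneg_left _ (by positivity)
        apply mul_le_mul_of_nonneg_left h3 (by positivity)
    _ = C * q ^ k := by
        rw [hC, show 2 * (k + 1 + i) = (k + 1) + ((2 * i + 1) + k) by ring, pow_add, pow_add]
        field_simp
        ring

lemma norm_termG (m k : ℕ) (z : ℂ) :
    ‖termG q i m k z‖ = 1 / q ^ (k + 1) * (ckR q i k) ^ m *
      Real.exp (z.re * ckR q i k) := by
  have hcpos := ckR_pos hq0 hq1 i k
  have hqp : (0:ℝ) < q ^ (k+1) := by positivity
  rw [termG]
  rw [norm_mul, norm_mul, Complex.norm_real,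
    Complex.norm_exp, norm_pow, Complex.norm_real]
  have : (z * ((ckR q i k : ℝ) : ℂ)).re = z.re * ckR q i k := by
    simp [Complex.mul_re]
  rw [this, Real.norm_eq_abs, Real.norm_eq_abs, abs_of_pos (show (0:ℝ) < 1/q^(k+1) by positivity),
    abs_of_pos hcpos]

lemma summable_termG (m : ℕ) {z : ℂ} (hz : z.re < 0) :
    Summable (fun k => termG q i m k z) := by
  apply Summable.of_norm
  have h := summable_bound hq0 hq1 i m (δ := -z.re) (by linarith)
  apply h.congr
  intro k
  rw [norm_termG hq0 hq1]
  ring_nf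

end aux2

section aux3
variable {q : ℝ} (hq0 : 0 < q) (hq1 : q < 1) (i : ℕ)
include hq0 hq1

lemma hasDerivAt_termG (m k : ℕ) (z : ℂ) :
    HasDerivAt (fun w => termG q i m k w) (termG q i (m + 1) k z) z := by
  have h : HasDerivAt (fun w : ℂ => Complex.exp (w * ((ckR q i k : ℝ) : ℂ)))
      (Complex.exp (z * ((ckR q i k : ℝ) : ℂ)) * ((ckR q i k : ℝ) : ℂ)) z :=
    (hasDerivAt_mul_const _).cexp
  have h1 := h.const_mul (((1 / q ^ (k + 1) : ℝ) : ℂ) * ((ckR q i k : ℝ) : ℂ) ^ m)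
  have h2 : ((1 / q ^ (k + 1) : ℝ) : ℂ) * ((ckR q i k : ℝ) : ℂ) ^ m *
      (Complex.exp (z * ((ckR q i k : ℝ) : ℂ)) * ((ckR q i k : ℝ) : ℂ)) =
      termG q i (m + 1) k z := by
    rw [termG]; ring
  rw [← h2]
  exact h1

lemma hasDerivAt_tsumG (m : ℕ) {ε : ℂ} (hε : ε.re < 0) :
    HasDerivAt (fun z => ∑' k, termG q i m k z) (∑' k, termG q i (m + 1) k ε) ε := by
  set δ := -ε.re / 2 with hδ
  have hδ0 : 0 < δ := by rw [hδ]; linarith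
  have hopen : IsOpen {z : ℂ | z.re < -δ} := isOpen_lt Complex.continuous_re continuous_const
  refine hasDerivAt_tsum_of_isPreconnected
    (u := fun k => 1 / q ^ (k + 1) * (ckR q i k) ^ (m + 1) * Real.exp (-(δ * ckR q i k)))
    (summable_bound hq0 hq1 i (m + 1) hδ0) hopen
    (convex_halfSpace_re_lt (-δ)).isPreconnected
    (fun k y _ => hasDerivAt_termG hq0 hq1 i m k y)
    (fun k y hy => ?_) (y₀ := ε) ?_ (summable_termG hq0 hq1 i m (by linarith)) ?_
  · rw [norm_termG hq0 hq1]
    have hc := ckR_pos hq0 hq1 i k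
    have : y.re * ckR q i k ≤ -(δ * ckR q i k) := by
      have : y.re ≤ -δ := le_of_lt hy
      nlinarith
    exact mul_le_mul_of_nonneg_left (Real.exp_le_exp.mpr this)
      (mul_nonneg (by positivity) (pow_nonneg hc.le _))
  · show ε.re < -δ
    rw [hδ]; linarith
  · show ε.re < -δ
    rw [hδ]; linarith

lemma iteratedDeriv_tsumG (m : ℕ) :
    ∀ {ε : ℂ}, ε.re < 0 → iteratedDeriv m (fun z => ∑' k, termG q i 0 k z) ε
      = ∑' k, termG q i m k ε := by
  induction m with
  | zero => intro ε hε; simp [iteratedDeriv_zero]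
  | succ m ih =>
    intro ε hε
    rw [iteratedDeriv_succ]
    have hopen : IsOpen {z : ℂ | z.re < 0} := isOpen_lt Complex.continuous_re continuous_const
    have heq : (iteratedDeriv m fun z => ∑' k, termG q i 0 k z)
        =ᶠ[nhds ε] fun z => ∑' k, termG q i m k z :=
      Filter.eventuallyEq_of_mem (hopen.mem_nhds hε) (fun z hz => ih hz)
    rw [heq.deriv_eq]
    exact (hasDerivAt_tsumG hq0 hq1 i m hε).deriv

end aux3

theorem xi_t_eq (q : ℝ) (hq0 : 0 < q) (hq1 : q < 1) (t : ℕ) (ε : ℂ) (hε : ε.re < 0)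
    (i : ℕ) (hi : 1 ≤ i) :
    ∑' k : ℕ, ((q ^ (-(((i : ℤ) + k + 1) * (t + 1))) * (qNum q ((i : ℝ) + k + 1)) ^ t : ℝ) : ℂ) *
        Complex.exp (ε * ((qNum q ((i : ℝ) + k + 1) / q ^ (i + k + 1) : ℝ) : ℂ)) =
      ∑ j ∈ Finset.range (t + 1), (t.choose j : ℂ) *
        (((qNum q (i : ℝ)) ^ j / q ^ (i * (j + 1)) : ℝ) : ℂ) *
        Complex.exp (ε * ((qNum q (i : ℝ) / q ^ i : ℝ) : ℂ)) *
        iteratedDeriv (t - j) (fun z => Zq0 q (z / ((q ^ i : ℝ) : ℂ))) ε := by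
  have hqc : (q : ℂ) ≠ 0 := Complex.ofReal_ne_zero.mpr hq0.ne'
  have hq' : q ≠ 0 := hq0.ne'
  have h1q : (0:ℝ) < 1 - q := by linarith
  -- Step 1: rewrite the function inside iteratedDeriv
  have hfun : (fun z => Zq0 q (z / ((q ^ i : ℝ) : ℂ))) = fun z => ∑' k, termG q i 0 k z := by
    funext z
    rw [Zq0]
    apply tsum_congr
    intro k
    rw [termG, pow_zero, mul_one]
    congr 1
    rw [ckR]
    push_cast
    field_simp
    ring
  rw [hfun]
  -- Step 2: replace iterated derivatives by tsums
  have hstep2 : ∀ j ∈ Finset.range (t + 1),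
      (t.choose j : ℂ) * (((qNum q (i : ℝ)) ^ j / q ^ (i * (j + 1)) : ℝ) : ℂ) *
        Complex.exp (ε * ((qNum q (i : ℝ) / q ^ i : ℝ) : ℂ)) *
        iteratedDeriv (t - j) (fun z => ∑' k, termG q i 0 k z) ε =
      ∑' k, (t.choose j : ℂ) * (((qNum q (i : ℝ)) ^ j / q ^ (i * (j + 1)) : ℝ) : ℂ) *
        Complex.exp (ε * ((qNum q (i : ℝ) / q ^ i : ℝ) : ℂ)) * termG q i (t - j) k ε := by
    intro j _
    rw [iteratedDeriv_tsumG hq0 hq1 i (t - j) hε, ← tsum_mul_left]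
  rw [Finset.sum_congr rfl hstep2]
  rw [← Summable.tsum_finsetSum (fun j _ => Summable.mul_left _ (summable_termG hq0 hq1 i (t - j) hε))]
  -- Step 3: termwise identity
  apply tsum_congr
  intro k
  -- real number facts
  have hik : (i : ℝ) + k + 1 = ((i + k + 1 : ℕ) : ℝ) := by push_cast; ring
  have hN : qNum q ((i : ℝ) + k + 1) = (1 - q ^ (i + k + 1)) / (1 - q) := by
    rw [hik, qNum_cast]
  have hxy : qNum q (i : ℝ) / q ^ i + ckR q i k =
      qNum q ((i : ℝ) + k + 1) * (q ^ (i + k + 1))⁻¹ := by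
    rw [hN, ckR, show ((k:ℝ) + 1) = ((k + 1 : ℕ) : ℝ) by push_cast; ring, qNum_cast, qNum_cast]
    have h1 : (1 : ℝ) - q ≠ 0 := h1q.ne'
    push_cast
    field_simp
    ring
  -- combine exponentials
  have hexp : ∀ j : ℕ, Complex.exp (ε * ((qNum q (i : ℝ) / q ^ i : ℝ) : ℂ)) *
      Complex.exp (ε * ((ckR q i k : ℝ) : ℂ)) =
      Complex.exp (ε * ((qNum q ((i : ℝ) + k + 1) / q ^ (i + k + 1) : ℝ) : ℂ)) := by
    intro j
    rw [← Complex.exp_add, ← mul_add]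
    congr 2
    rw [← Complex.ofReal_add, hxy]
    norm_num [div_eq_mul_inv]
  -- rewrite each summand as (real coefficient) * E
  have hsummand : ∀ j ∈ Finset.range (t + 1),
      (t.choose j : ℂ) * (((qNum q (i : ℝ)) ^ j / q ^ (i * (j + 1)) : ℝ) : ℂ) *
        Complex.exp (ε * ((qNum q (i : ℝ) / q ^ i : ℝ) : ℂ)) * termG q i (t - j) k ε =
      (((t.choose j : ℝ) * ((qNum q (i : ℝ)) ^ j / q ^ (i * (j + 1))) *
        (1 / q ^ (k + 1) * (ckR q i k) ^ (t - j)) : ℝ) : ℂ) *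
        Complex.exp (ε * ((qNum q ((i : ℝ) + k + 1) / q ^ (i + k + 1) : ℝ) : ℂ)) := by
    intro j _
    rw [termG, ← hexp j]
    push_cast
    ring
  rw [Finset.sum_congr rfl hsummand, ← Finset.sum_mul]
  congr 1
  rw [← Complex.ofReal_sum]
  congr 1
  -- the real coefficient identity
  have hzpow : (q : ℝ) ^ (-(((i : ℤ) + k + 1) * (t + 1))) =
      ((q ^ ((i + k + 1) * (t + 1)) : ℝ))⁻¹ := by
    have he : (-(((i : ℤ) + k + 1) * ((t : ℤ) + 1))) = -(((i + k + 1) * (t + 1) : ℕ) : ℤ) := by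
      push_cast; ring
    rw [he, zpow_neg, zpow_natCast]
  rw [hzpow]
  have hsum : ∑ j ∈ Finset.range (t + 1),
      (t.choose j : ℝ) * ((qNum q (i : ℝ)) ^ j / q ^ (i * (j + 1))) *
        (1 / q ^ (k + 1) * (ckR q i k) ^ (t - j)) =
      (∑ j ∈ Finset.range (t + 1),
        (qNum q (i : ℝ) / q ^ i) ^ j * (ckR q i k) ^ (t - j) * (t.choose j : ℝ)) *
        (q ^ (i + k + 1))⁻¹ := by
    rw [Finset.sum_mul]
    apply Finset.sum_congr rfl
    intro j _
    rw [pow_mul, div_pow]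
    field_simp
    ring
  rw [hsum, ← add_pow, hxy, mul_pow]
  have hq2 : ((q : ℝ) ^ ((i + k + 1) * (t + 1)))⁻¹ =
      ((q ^ (i + k + 1) : ℝ)⁻¹) ^ t * (q ^ (i + k + 1) : ℝ)⁻¹ := by
    rw [← pow_succ, inv_pow, ← pow_mul]
  rw [hq2]
  ring
end

section
/- Let 0 < q < 1, s a complex number, and k a positive integer. With F(x, s; ε) = q^{x(s-1)} exp(ε(q^{-x}-1)/(1-q))/(1-q^x)^s for Re(ε) < 0, the substitution t = ε(q^{-x}-1)/(1-q) gives ∫_k^∞ F(x, s; ε) dx = (1/ln q) (ε/(1-q))^{s-1} ∫_{-∞}^{ε(q^{-k}-1)/(1-q)} e^t/t^s dt. -/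
open Real Complex MeasureTheory

private lemma mul_ofReal_cpow_aux (a : ℂ) (ha : a ≠ 0) {r : ℝ} (hr : 0 < r) (s : ℂ) :
    (a * (r : ℂ)) ^ s = a ^ s * (r : ℂ) ^ s := by
  have hr' : (r : ℂ) ≠ 0 := by exact_mod_cast hr.ne'
  rw [Complex.cpow_def_of_ne_zero (mul_ne_zero ha hr'),
    Complex.log_mul_ofReal r hr a ha, add_mul, Complex.exp_add,
    ← Complex.cpow_def_of_ne_zero ha, Complex.cpow_def_of_ne_zero hr',
    Complex.ofReal_log hr.le, mul_comm]

theorem integral_F_substitution (q : ℝ) (hq0 : 0 < q) (hq1 : q < 1)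
    (ε : ℝ) (hε : ε < 0) (s : ℂ) (k : ℕ) (hk : 1 ≤ k) :
    ∫ x in Set.Ioi (k : ℝ),
        ((q : ℂ) ^ ((x : ℂ) * (s - 1)) *
          Complex.exp ((ε : ℂ) * (((q ^ (-x) - 1) / (1 - q) : ℝ) : ℂ)) /
          (((1 - q ^ x : ℝ) : ℂ) ^ s)) =
      ((1 / Real.log q : ℝ) : ℂ) * ((ε / (1 - q) : ℝ) : ℂ) ^ (s - 1) *
        ∫ t in Set.Iio (ε * (q ^ (-(k : ℝ)) - 1) / (1 - q)),
          Complex.exp (t : ℂ) / ((t : ℂ) ^ s) := by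
  have h1q : (0:ℝ) < 1 - q := by linarith
  have hL : Real.log q < 0 := Real.log_neg hq0 hq1
  have hL0 : Real.log q ≠ 0 := hL.ne
  have hε0 : ε ≠ 0 := hε.ne
  set A : ℝ := ε / (1 - q) with hA_def
  have hA : A < 0 := div_neg_of_neg_of_pos hε h1q
  have hA0 : A ≠ 0 := hA.ne
  set K : ℝ := (k : ℝ) with hK_def
  have hK0 : 0 < K := by positivity
  set f : ℝ → ℝ := fun x => ε * (q ^ (-x) - 1) / (1 - q) with hf_def
  set f' : ℝ → ℝ := fun x => A * (q ^ (-x) * Real.log q * (-1)) with hf'_def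
  have hfA : ∀ x, f x = A * (q ^ (-x) - 1) := fun x => by
    rw [hf_def, hA_def]; ring
  -- derivative
  have hderiv : ∀ x : ℝ, HasDerivAt f (f' x) x := by
    intro x
    have h1 : HasDerivAt (fun y : ℝ => q ^ (-y)) (q ^ (-x) * Real.log q * (-1)) x := by
      have := ((Real.hasStrictDerivAt_const_rpow hq0 (-x)).hasDerivAt).comp x
        ((hasDerivAt_id x).neg)
      simpa [Function.comp_def] using this
    have := ((h1.sub_const 1).const_mul A)
    have heq : (fun y : ℝ => A * (q ^ (-y) - 1)) = f := by
      funext y; rw [hfA y]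
    rw [heq] at this
    simpa [hf'_def] using this
  -- strict antitonicity
  have hanti : StrictAnti f := by
    intro x y hxy
    rw [hfA, hfA]
    have : q ^ (-x) < q ^ (-y) :=
      Real.rpow_lt_rpow_of_exponent_gt hq0 hq1 (by linarith)
    nlinarith
  -- image of Ioi K
  have himage : f '' Set.Ioi K = Set.Iio (f K) := by
    ext t
    constructor
    · rintro ⟨x, hx, rfl⟩
      exact hanti hx
    · intro ht
      have hqK : (0:ℝ) < q ^ (-K) := Real.rpow_pos_of_pos hq0 _
      set v : ℝ := 1 + t * (1 - q) / ε with hv_def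
      have hvK : q ^ (-K) < v := by
        have h2 : f K * ((1 - q) / ε) < t * ((1 - q) / ε) := by
          apply mul_lt_mul_of_neg_right ht
          exact div_neg_of_pos_of_neg h1q hε
        have h3 : f K * ((1 - q) / ε) = q ^ (-K) - 1 := by
          rw [hf_def]; field_simp
        rw [h3] at h2
        have h4 : t * (1 - q) / ε = t * ((1 - q) / ε) := by ring
        rw [hv_def, h4]; linarith
      have hv0 : 0 < v := lt_trans hqK hvK
      set x : ℝ := Real.log v / (-Real.log q) with hx_def
      have hlq : (0:ℝ) < -Real.log q := by linarith
      have hxK : K < x := by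
        rw [hx_def, lt_div_iff₀ hlq]
        have : Real.log (q ^ (-K)) < Real.log v := Real.log_lt_log hqK hvK
        rw [Real.log_rpow hq0] at this
        linarith
      have hqx : q ^ (-x) = v := by
        rw [Real.rpow_def_of_pos hq0]
        have : Real.log q * (-x) = Real.log v := by
          rw [hx_def]; field_simp
        rw [this, Real.exp_log hv0]
      refine ⟨x, hxK, ?_⟩
      rw [hf_def]
      simp only [hqx, hv_def]
      field_simp
      ring
  -- substitution
  have hsub : ∫ t in Set.Iio (f K), Complex.exp (t : ℂ) / ((t : ℂ) ^ s) =
      ∫ x in Set.Ioi K, |f' x| • (Complex.exp ((f x : ℝ) : ℂ) / (((f x : ℝ) : ℂ) ^ s)) := by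
    rw [← himage]
    exact integral_image_eq_integral_abs_deriv_smul measurableSet_Ioi
      (fun x _ => (hderiv x).hasDerivWithinAt) (hanti.injective.injOn)
      (fun t => Complex.exp (t : ℂ) / ((t : ℂ) ^ s))
  have hfK : ε * (q ^ (-(k : ℝ)) - 1) / (1 - q) = f K := rfl
  rw [hfK, hsub, ← MeasureTheory.integral_const_mul]
  symm
  apply MeasureTheory.setIntegral_congr_fun measurableSet_Ioi
  intro x hx
  simp only [Set.mem_Ioi] at hx
  have hx0 : 0 < x := lt_trans hK0 hx
  -- notations
  set u : ℝ := q ^ (-x) with hu_def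
  set P : ℝ := q ^ x with hP_def
  have hP0 : 0 < P := Real.rpow_pos_of_pos hq0 _
  have hu0 : 0 < u := Real.rpow_pos_of_pos hq0 _
  have hPu : P * u = 1 := by
    rw [hP_def, hu_def, ← Real.rpow_add hq0]; simp
  have hP1 : P < 1 := Real.rpow_lt_one hq0.le hq1 hx0
  have h1P : 0 < 1 - P := by linarith
  have hfx : f x = A * ((1 - P) * u) := by
    rw [hfA]
    have : (1 - P) * u = u - 1 := by nlinarith [hPu]
    rw [this]
  -- |f' x|
  have habs : |f' x| = A * Real.log q * u := by
    have hpos : (0:ℝ) < A * Real.log q * u :=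
      mul_pos (mul_pos_of_neg_of_neg hA hL) hu0
    have hval : f' x = -(A * Real.log q * u) := by
      simp only [hf'_def, ← hu_def]; ring
    rw [hval, abs_neg, abs_of_pos hpos]
  -- nonvanishing facts
  have hAc0 : (A : ℂ) ≠ 0 := Complex.ofReal_ne_zero.mpr hA0
  have hU0 : ((u : ℝ) : ℂ) ≠ 0 := Complex.ofReal_ne_zero.mpr hu0.ne'
  have hUs0 : ((u : ℝ) : ℂ) ^ s ≠ 0 := by
    simp [Complex.cpow_eq_zero_iff, hU0]
  have hW0 : ((1 - P : ℝ) : ℂ) ^ s ≠ 0 := fun h =>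
    (Complex.ofReal_ne_zero.mpr h1P.ne') ((Complex.cpow_eq_zero_iff _ _).mp h).1
  have hAs0 : (A : ℂ) ^ s ≠ 0 := by
    simp [Complex.cpow_eq_zero_iff, hAc0]
  -- exponential argument
  have hexp : (ε : ℂ) * (((q ^ (-x) - 1) / (1 - q) : ℝ) : ℂ) = ((f x : ℝ) : ℂ) := by
    simp only [hf_def]
    push_cast
    ring
  -- the q-power
  have him : (Complex.log (q : ℂ) * (x : ℂ)).im = 0 := by
    rw [← Complex.ofReal_log hq0.le, ← Complex.ofReal_mul]; simp
  have hQ : (q : ℂ) ^ ((x : ℂ) * (s - 1)) = ((P : ℝ) : ℂ) ^ (s - 1) := by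
    rw [Complex.cpow_mul _ (by rw [him]; linarith [Real.pi_pos])
      (by rw [him]; linarith [Real.pi_pos]), hP_def, Complex.ofReal_cpow hq0.le]
  -- splitting (f x)^s
  have hfs : ((f x : ℝ) : ℂ) ^ s =
      (A : ℂ) ^ s * ((1 - P : ℝ) : ℂ) ^ s * ((u : ℝ) : ℂ) ^ s := by
    rw [hfx, Complex.ofReal_mul,
      mul_ofReal_cpow_aux _ hAc0 (mul_pos h1P hu0), Complex.ofReal_mul,
      Complex.mul_cpow_ofReal_nonneg h1P.le hu0.le, ← mul_assoc]
  -- P^(s-1) = u / u^s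
  have hPs : ((P : ℝ) : ℂ) ^ (s - 1) = ((u : ℝ) : ℂ) / ((u : ℝ) : ℂ) ^ s := by
    have hPinv : ((P : ℝ) : ℂ) = (((u : ℝ) : ℂ))⁻¹ := by
      rw [eq_inv_of_mul_eq_one_left hPu]; push_cast; ring
    rw [hPinv, Complex.inv_cpow _ _
      (by rw [Complex.arg_ofReal_of_nonneg hu0.le]; exact Real.pi_ne_zero.symm),
      ← Complex.cpow_neg, neg_sub, Complex.cpow_sub _ _ hU0, Complex.cpow_one]
  have hAs1 : (A : ℂ) ^ (s - 1) = (A : ℂ) ^ s / (A : ℂ) := by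
    rw [Complex.cpow_sub _ _ hAc0, Complex.cpow_one]
  beta_reduce
  rw [habs, hexp, ← hP_def, hQ, hfs, hPs, hAs1, Complex.real_smul]
  have hLc : ((Real.log q : ℝ) : ℂ) ≠ 0 := Complex.ofReal_ne_zero.mpr hL0
  rw [Complex.ofReal_mul, Complex.ofReal_mul, Complex.ofReal_div, Complex.ofReal_one]
  clear_value A u P
  have k1 : ((A : ℝ) : ℂ) ^ s * (((A : ℝ) : ℂ) ^ s)⁻¹ = 1 := mul_inv_cancel₀ hAs0
  have k2 : ((A : ℝ) : ℂ) * (((A : ℝ) : ℂ))⁻¹ = 1 := mul_inv_cancel₀ hAc0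
  have k3 : ((Real.log q : ℝ) : ℂ) * (((Real.log q : ℝ) : ℂ))⁻¹ = 1 := mul_inv_cancel₀ hLc
  set E : ℂ := Complex.exp ((f x : ℝ) : ℂ) with hE_def
  set C : ℂ := ((u : ℝ) : ℂ) * E * ((((1 - P : ℝ) : ℂ)) ^ s)⁻¹ * ((((u : ℝ) : ℂ)) ^ s)⁻¹
    with hC_def
  linear_combination
    (C * ((A : ℝ) : ℂ) * (((A : ℝ) : ℂ))⁻¹ * ((Real.log q : ℝ) : ℂ) *
        (((Real.log q : ℝ) : ℂ))⁻¹) * k1 +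
    (C * ((Real.log q : ℝ) : ℂ) * (((Real.log q : ℝ) : ℂ))⁻¹) * k2 +
    C * k3
end

section
/- With M(q) defined by M(q) = q - 1/2 + (q/12)(ln q)/(q-1) - ((1-q)(ln q)²/2) ∫_1^∞ B̃_2(x)(2 - 3(1-q^x) + (1-q^x)²)/(1-q^x)³ dx for 0 < q < 1, one has lim_{q → 1⁻} M(q) = γ, the Euler–Mascheroni constant. -/
open Real Filter MeasureTheory Set Topology

/-- The periodic second Bernoulli polynomial `B̃_2(x) = {x}² - {x} + 1/6`. -/
noncomputable def pB2 (x : ℝ) : ℝ := Int.fract x ^ 2 - Int.fract x + 1 / 6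



lemma abs_pB2_le (x : ℝ) : |pB2 x| ≤ 1/6 := by
  have h0 := Int.fract_nonneg x
  have h1 := Int.fract_lt_one x
  rw [abs_le, pB2]
  constructor <;> nlinarith

lemma measurable_pB2 : Measurable pB2 :=
  ((measurable_fract.pow_const 2).sub measurable_fract).add_const _

lemma integrableOn_div_cube (c : ℝ) : IntegrableOn (fun x : ℝ => c / x ^ 3) (Ioi 1) := by
  have h : IntegrableOn (fun x : ℝ => x ^ (-3 : ℝ)) (Ioi 1) :=
    integrableOn_Ioi_rpow_of_lt (by norm_num) one_pos
  have h2 : IntegrableOn (fun x : ℝ => c * x ^ (-3 : ℝ)) (Ioi 1) := h.const_mul c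
  refine (h2.congr_fun (fun x hx => ?_) measurableSet_Ioi)
  have hx0 : (0:ℝ) < x := lt_trans one_pos hx
  beta_reduce
  rw [rpow_neg hx0.le, ← rpow_natCast x 3, div_eq_mul_inv]
  norm_num

lemma integrableOn_pB2_div_cube : IntegrableOn (fun x : ℝ => pB2 x / x ^ 3) (Ioi 1) := by
  have hm : AEStronglyMeasurable (fun x : ℝ => pB2 x / x ^ 3)
      (volume.restrict (Ioi 1)) :=
    ((measurable_pB2.div (measurable_id.pow_const 3))).aestronglyMeasurable
  refine Integrable.mono (integrableOn_div_cube (1/6)) hm ?_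
  filter_upwards [ae_restrict_mem measurableSet_Ioi] with x hx
  have hx0 : (0:ℝ) < x := lt_trans one_pos hx
  rw [norm_div, norm_pow, Real.norm_eq_abs, Real.norm_eq_abs, abs_of_pos hx0,
    Real.norm_eq_abs, abs_of_pos (by positivity : (0:ℝ) < 1/6 / x ^ 3)]
  exact div_le_div_of_nonneg_right (abs_pB2_le x) (by positivity)


-- antiderivative step on [a, a+1]
lemma step_integral (a : ℝ) (ha : 1 ≤ a) :
    ∫ x in a..(a+1), (((x-a)^2 - (x-a) + 1/6) / x^3) =
      (Real.log (a+1) + (2*a+1)/(a+1) - (a^2+a+1/6)/(2*(a+1)^2))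
        - (Real.log a + (2*a+1)/a - (a^2+a+1/6)/(2*a^2)) := by
  have ha0 : (0:ℝ) < a := lt_of_lt_of_le one_pos ha
  have hsub : uIcc a (a+1) ⊆ Ioi (0:ℝ) := by
    rw [uIcc_of_le (by linarith)]
    intro x hx; exact lt_of_lt_of_le ha0 hx.1
  refine intervalIntegral.integral_eq_sub_of_hasDerivAt
    (f := fun x : ℝ => Real.log x + (2*a+1)/x - (a^2+a+1/6)/(2*x^2)) (fun x hx => ?_) ?_
  · have hx0 : (0:ℝ) < x := hsub hx
    have hx2 : (2:ℝ)*x^2 ≠ 0 := by positivity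
    have h1 : HasDerivAt Real.log x⁻¹ x := Real.hasDerivAt_log hx0.ne'
    have h2 := (hasDerivAt_inv hx0.ne').const_mul (2*a+1)
    have hb : HasDerivAt (fun x : ℝ => 2*x^2) (2*(2*x^1)) x := (hasDerivAt_pow 2 x).const_mul 2
    have h3 := (hb.inv hx2).const_mul (a^2+a+1/6)
    have h := (h1.add h2).sub h3
    simp only [div_eq_mul_inv]
    convert h using 1
    · rfl
    field_simp
    ring
  · apply ContinuousOn.intervalIntegrable
    apply ContinuousOn.div
    · fun_prop
    · fun_prop
    · intro x hx; exact pow_ne_zero 3 (hsub hx).ne'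

lemma fract_step (n : ℕ) (hn : 1 ≤ n) :
    ∫ x in (n:ℝ)..((n:ℝ)+1), pB2 x / x^3
      = ∫ x in (n:ℝ)..((n:ℝ)+1), (((x-(n:ℝ))^2 - (x-(n:ℝ)) + 1/6) / x^3) := by
  apply intervalIntegral.integral_congr_ae
  have hae : ∀ᵐ x : ℝ, x ≠ ((n:ℝ)+1) := by
    refine (MeasureTheory.ae_iff).2 ?_
    simpa using measure_singleton ((n:ℝ)+1)
  filter_upwards [hae] with x hx hmem
  rw [uIoc_of_le (by linarith : (n:ℝ) ≤ (n:ℝ)+1)] at hmem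
  have hfr : Int.fract x = x - (n:ℝ) := by
    have hfl : ⌊x⌋ = (n : ℤ) := by
      rw [Int.floor_eq_iff]
      constructor
      · exact_mod_cast hmem.1.le
      · push_cast
        exact lt_of_le_of_ne hmem.2 hx
    rw [Int.fract, hfl]; push_cast; ring
  rw [pB2, hfr]

lemma harmonic_identity (N : ℕ) (hN : 1 ≤ N) :
    ∫ x in (1:ℝ)..(N:ℝ), pB2 x / x^3
      = Real.log N - (harmonic N : ℝ) + 1/2 + 1/(2*N) + 1/12 - 1/(12*N^2) := by
  induction N with
  | zero => omega
  | succ n ih =>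
    rcases Nat.eq_or_lt_of_le hN with h1 | h2
    · -- N = 1
      have : n = 0 := by omega
      subst this
      norm_num [intervalIntegral.integral_same]
    · have hn1 : 1 ≤ n := by omega
      have hInt : IntegrableOn (fun x : ℝ => pB2 x / x ^ 3) (Ioi 1) :=
        integrableOn_pB2_div_cube
      have hii : ∀ a b : ℝ, 1 ≤ a → a ≤ b → IntervalIntegrable (fun x : ℝ => pB2 x / x^3) volume a b := by
        intro a b hab h
        rw [intervalIntegrable_iff, uIoc_of_le h]
        exact hInt.mono_set (fun x hx => lt_of_le_of_lt hab hx.1)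
      have hadd := intervalIntegral.integral_add_adjacent_intervals (a := (1:ℝ)) (b := (n:ℝ)) (c := (n:ℝ)+1)
        (f := fun x : ℝ => pB2 x / x^3) (hii 1 n (le_refl _) (by exact_mod_cast hn1))
        (hii n (n+1) (by exact_mod_cast hn1) (by linarith))
      have hcast : ((n.succ : ℕ) : ℝ) = (n:ℝ) + 1 := by push_cast; ring
      rw [hcast, ← hadd, ih hn1, fract_step n hn1, step_integral (n:ℝ) (by exact_mod_cast hn1)]
      have hh : (harmonic (n+1) : ℝ) = (harmonic n : ℝ) + 1/((n:ℝ)+1) := by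
        rw [harmonic_succ]; push_cast; ring
      rw [hh]
      have hn0 : (0:ℝ) < (n:ℝ) := by exact_mod_cast hn1
      have hne : (n:ℝ) ≠ 0 := hn0.ne'
      have hne1 : (n:ℝ)+1 ≠ 0 := by positivity
      field_simp
      ring


lemma integral_pB2_value :
    ∫ x in Ioi (1:ℝ), pB2 x / x^3 = 7/12 - Real.eulerMascheroniConstant := by
  have h1 : Tendsto (fun N : ℕ => ∫ x in (1:ℝ)..(N:ℝ), pB2 x / x^3) atTop
      (𝓝 (∫ x in Ioi (1:ℝ), pB2 x / x^3)) :=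
    MeasureTheory.intervalIntegral_tendsto_integral_Ioi 1 integrableOn_pB2_div_cube
      tendsto_natCast_atTop_atTop
  have h2 : Tendsto (fun N : ℕ => Real.log N - (harmonic N : ℝ) + 1/2 + 1/(2*(N:ℝ)) + 1/12
      - 1/(12*(N:ℝ)^2)) atTop (𝓝 (7/12 - Real.eulerMascheroniConstant)) := by
    have hg : Tendsto (fun N : ℕ => ((harmonic N : ℝ) - Real.log N)) atTop
        (𝓝 Real.eulerMascheroniConstant) := Real.tendsto_harmonic_sub_log
    have hz1 : Tendsto (fun N : ℕ => 1/(2*(N:ℝ))) atTop (𝓝 0) := by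
      have := tendsto_natCast_atTop_atTop (R := ℝ)
      simpa [div_eq_mul_inv] using ((this.const_mul_atTop two_pos).inv_tendsto_atTop).const_mul 1
    have hz2 : Tendsto (fun N : ℕ => 1/(12*(N:ℝ)^2)) atTop (𝓝 0) := by
      have hsq : Tendsto (fun N : ℕ => (N:ℝ)^2) atTop atTop :=
        (tendsto_pow_atTop two_ne_zero).comp (tendsto_natCast_atTop_atTop (R := ℝ))
      simpa [div_eq_mul_inv] using ((hsq.const_mul_atTop (by norm_num : (0:ℝ) < 12)).inv_tendsto_atTop).const_mul 1
    have := ((((hg.neg.add_const (1/2)).add hz1).add_const (1/12)).sub hz2)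
    convert this using 2 with N
    · ring
    · ring
  have h1' := h1.congr' (by
    filter_upwards [eventually_ge_atTop 1] with N hN
    exact harmonic_identity N hN)
  exact tendsto_nhds_unique h1' h2


lemma Fq_bound {q x : ℝ} (hq : q ∈ Ioo (0:ℝ) 1) (hx : 1 < x) :
    |((1-q)*(Real.log q)^2/2) * (pB2 x * (2 - 3*(1-q^x) + (1-q^x)^2)/(1-q^x)^3)| ≤ 5 / x^3 := by
  obtain ⟨hq0, hq1⟩ := hq
  have hx0 : (0:ℝ) < x := by linarith
  have hlq : Real.log q < 0 := Real.log_neg hq0 hq1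
  set t : ℝ := -Real.log q with ht_def
  have ht : 0 < t := by simp only [ht_def]; linarith
  set s : ℝ := t * x with hs_def
  have hs : 0 < s := mul_pos ht hx0
  have hqx : q ^ x = Real.exp (-s) := by
    rw [Real.rpow_def_of_pos hq0, hs_def, ht_def]
    ring_nf
  set E : ℝ := Real.exp (-s) with hE_def
  have hE0 : 0 < E := Real.exp_pos _
  have hE1 : E < 1 := by
    rw [hE_def, Real.exp_lt_one_iff]; linarith
  have hu0 : 0 < 1 - E := by linarith
  have h1q : 1 - q ≤ t := by
    have h := Real.add_one_le_exp (-t)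
    have hq' : Real.exp (-t) = q := by rw [ht_def, neg_neg, Real.exp_log hq0]
    linarith
  have hut : s / (1+s) ≤ 1 - E := by
    have h := Real.add_one_le_exp s
    have hEle : E ≤ (1+s)⁻¹ := by
      rw [hE_def, Real.exp_neg]
      exact inv_anti₀ (by linarith) (by linarith)
    have hinv : 1 - (1+s)⁻¹ = s/(1+s) := by field_simp; ring
    linarith
  have h27 : E * (1+s)^3 ≤ 27 := by
    have h := Real.add_one_le_exp (s/3)
    have h3 : (1 + s/3)^3 ≤ Real.exp s := by
      calc (1+s/3)^3 ≤ (Real.exp (s/3))^3 := by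
            apply pow_le_pow_left₀ (by linarith) (by linarith)
        _ = Real.exp s := by rw [← Real.exp_nat_mul]; congr 1; push_cast; ring
    have h4 : (1+s)^3 ≤ 27 * Real.exp s := by nlinarith [hs]
    have hEe : E * Real.exp s = 1 := by rw [hE_def, ← Real.exp_add]; simp
    nlinarith [Real.exp_pos s]
  -- rewrite the expression
  have hlq2 : (Real.log q)^2 = t^2 := by rw [ht_def]; ring
  have hc0 : 0 ≤ (1-q)*t^2/2 :=
    div_nonneg (mul_nonneg (by linarith) (by positivity)) (by norm_num)
  have hn : 2 - 3*(1-q^x) + (1-q^x)^2 = E*(1+E) := by rw [hqx]; ring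
  have hDq : (1-q^x)^3 = (1-E)^3 := by rw [hqx]
  have hnpos : 0 < E*(1+E) := by nlinarith
  have hu3 : (0:ℝ) < (1-E)^3 := by positivity
  have habs : |((1-q)*(Real.log q)^2/2) * (pB2 x * (2 - 3*(1-q^x) + (1-q^x)^2)/(1-q^x)^3)|
      = ((1-q)*t^2/2) * (|pB2 x| * (E*(1+E))/(1-E)^3) := by
    rw [hlq2, hn, hDq, abs_mul, abs_of_nonneg hc0, abs_div, abs_mul,
      abs_of_pos hnpos, abs_of_pos hu3]
  rw [habs]
  have hstep1 : ((1-q)*t^2/2) * (|pB2 x| * (E*(1+E))/(1-E)^3)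
      ≤ (t^3/2) * ((1/6) * (2*E)/(1-E)^3) := by
    apply mul_le_mul
    · nlinarith
    · apply div_le_div_of_nonneg_right ?_ hu3.le
      · apply mul_le_mul (abs_pB2_le x) (by nlinarith) hnpos.le (by norm_num)
    · positivity
    · positivity
  have hstep2 : (t^3/2) * ((1/6) * (2*E)/(1-E)^3) = t^3*E/(6*(1-E)^3) := by
    field_simp
  have husc : s^3 ≤ (1-E)^3 * (1+s)^3 := by
    have h1 : (s/(1+s))^3 ≤ (1-E)^3 := by
      apply pow_le_pow_left₀ (le_of_lt (div_pos hs (by linarith))) hut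
    have h2 : (s/(1+s))^3 = s^3/(1+s)^3 := div_pow s (1+s) 3
    rw [h2] at h1
    have hp : (0:ℝ) < (1+s)^3 := by positivity
    calc s^3 = (s^3/(1+s)^3) * (1+s)^3 := by field_simp
      _ ≤ (1-E)^3 * (1+s)^3 := by
          apply mul_le_mul_of_nonneg_right h1 hp.le
  have hfinal : t^3*E/(6*(1-E)^3) ≤ 5 / x^3 := by
    rw [div_le_div_iff₀ (by positivity) (by positivity)]
    have hts : t^3 * x^3 = s^3 := by rw [hs_def]; ring
    have w1 : E * s^3 ≤ E * ((1-E)^3 * (1+s)^3) :=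
      mul_le_mul_of_nonneg_left husc hE0.le
    have w2 : (1-E)^3 * (E * (1+s)^3) ≤ (1-E)^3 * 27 :=
      mul_le_mul_of_nonneg_left h27 hu3.le
    calc t^3*E*x^3 = E * s^3 := by rw [← hts]; ring
      _ ≤ E * ((1-E)^3*(1+s)^3) := w1
      _ = (1-E)^3 * (E*(1+s)^3) := by ring
      _ ≤ (1-E)^3 * 27 := w2
      _ ≤ 5*(6*(1-E)^3) := by linarith [hu3.le]
  calc ((1-q)*t^2/2) * (|pB2 x| * (E*(1+E))/(1-E)^3)
      ≤ (t^3/2) * ((1/6) * (2*E)/(1-E)^3) := hstep1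
    _ = t^3*E/(6*(1-E)^3) := hstep2
    _ ≤ 5 / x^3 := hfinal

lemma Fq_tendsto {x : ℝ} (hx : 1 < x) :
    Tendsto (fun q => ((1-q)*(Real.log q)^2/2) *
        (pB2 x * (2 - 3*(1-q^x) + (1-q^x)^2)/(1-q^x)^3))
      (𝓝[Ioo (0:ℝ) 1] 1) (𝓝 (pB2 x / x^3)) := by
  have hx0 : (0:ℝ) < x := by linarith
  set l : Filter ℝ := 𝓝[Ioo (0:ℝ) 1] 1 with hl_def
  have hl_ne : l ≤ 𝓝[≠] (1:ℝ) :=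
    nhdsWithin_mono 1 (fun q hq => ne_of_lt hq.2)
  have hl_n : l ≤ 𝓝 (1:ℝ) := nhdsWithin_le_nhds
  -- A : (q-1)/log q → 1
  have hslope : Tendsto (fun q : ℝ => Real.log q / (q - 1)) (𝓝[≠] (1:ℝ)) (𝓝 1) := by
    have h := (Real.hasDerivAt_log one_ne_zero)
    rw [hasDerivAt_iff_tendsto_slope] at h
    simp only [inv_one] at h
    exact h.congr fun q => by rw [slope_def_field, Real.log_one, sub_zero]
  have hA : Tendsto (fun q : ℝ => (q - 1) / Real.log q) l (𝓝 1) := by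
    have := ((hslope.mono_left hl_ne).inv₀ one_ne_zero)
    simpa [inv_div] using this
  -- φ q = x * log q tends to 0 within ≠ 0
  have hφ : Tendsto (fun q : ℝ => x * Real.log q) l (𝓝[≠] (0:ℝ)) := by
    rw [tendsto_nhdsWithin_iff]
    constructor
    · have hlog : Tendsto (fun q : ℝ => Real.log q) l (𝓝 0) := by
        have := (Real.continuousAt_log one_ne_zero).tendsto
        rw [Real.log_one] at this
        exact this.mono_left hl_n
      simpa using hlog.const_mul x
    · filter_upwards [self_mem_nhdsWithin] with q hq
      have : Real.log q < 0 := Real.log_neg hq.1 hq.2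
      have : x * Real.log q < 0 := mul_neg_of_pos_of_neg hx0 this
      exact Set.mem_compl_singleton_iff.mpr this.ne
  -- slope of exp at 0
  have hexpslope : Tendsto (fun y : ℝ => (Real.exp y - 1) / y) (𝓝[≠] (0:ℝ)) (𝓝 1) := by
    have h := Real.hasDerivAt_exp 0
    rw [hasDerivAt_iff_tendsto_slope] at h
    rw [Real.exp_zero] at h
    exact h.congr fun y => by rw [slope_def_field, Real.exp_zero, sub_zero]
  have hBinv : Tendsto (fun q : ℝ => (Real.exp (x * Real.log q) - 1) / (x * Real.log q)) l
      (𝓝 1) := hexpslope.comp hφ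
  have hB : Tendsto (fun q : ℝ => (x * Real.log q) / (q ^ x - 1)) l (𝓝 1) := by
    have h1 := hBinv.inv₀ one_ne_zero
    rw [inv_one] at h1
    apply h1.congr'
    filter_upwards [self_mem_nhdsWithin] with q hq
    rw [inv_div]
    congr 1
    rw [Real.rpow_def_of_pos hq.1, mul_comm]
  -- u → 0
  have hu : Tendsto (fun q : ℝ => 1 - q ^ x) l (𝓝 0) := by
    have hc : ContinuousAt (fun q : ℝ => q ^ x) 1 :=
      Real.continuousAt_rpow_const 1 x (Or.inl one_ne_zero)
    have := hc.tendsto.mono_left hl_n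
    rw [Real.one_rpow] at this
    simpa using (tendsto_const_nhds (x := (1:ℝ)) (f := l)).sub this
  have hn2 : Tendsto (fun q : ℝ => 2 - 3*(1-q^x) + (1-q^x)^2) l (𝓝 2) := by
    have := ((tendsto_const_nhds (x := (2:ℝ)) (f := l)).sub (hu.const_mul 3)).add (hu.pow 2)
    simpa using this
  -- combine
  have htot := ((hA.const_mul (pB2 x/(2*x^3))).mul (hB.pow 3)).mul hn2
  rw [mul_one, one_pow, mul_one] at htot
  have htot2 : Tendsto (fun q : ℝ =>
      (pB2 x/(2*x^3)) * ((q-1)/Real.log q) * ((x*Real.log q)/(q^x-1))^3 *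
        (2 - 3*(1-q^x) + (1-q^x)^2)) l (𝓝 (pB2 x / x^3)) := by
    have h2 : (pB2 x/(2*x^3)) * 2 = pB2 x / x^3 := by field_simp
    rw [← h2]
    exact htot
  apply htot2.congr'
  filter_upwards [self_mem_nhdsWithin] with q hq
  have hlq : Real.log q ≠ 0 := (Real.log_neg hq.1 hq.2).ne
  have hqx1 : q ^ x < 1 := by
    rw [← Real.one_rpow x]
    exact Real.rpow_lt_rpow hq.1.le hq.2 hx0
  have hqxne : q ^ x - 1 ≠ 0 := by linarith
  have h1ne : (1:ℝ) - q ^ x ≠ 0 := by linarith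
  field_simp
  ring

lemma tendsto_integral_part :
    Tendsto (fun q : ℝ => ∫ x in Ioi (1:ℝ),
        ((1-q)*(Real.log q)^2/2) * (pB2 x * (2 - 3*(1-q^x) + (1-q^x)^2)/(1-q^x)^3))
      (𝓝[Ioo (0:ℝ) 1] 1) (𝓝 (∫ x in Ioi (1:ℝ), pB2 x / x^3)) := by
  apply MeasureTheory.tendsto_integral_filter_of_dominated_convergence
    (bound := fun x : ℝ => 5 / x^3)
  · filter_upwards [self_mem_nhdsWithin] with q hq
    apply Measurable.aestronglyMeasurable
    have hqx : Measurable fun x : ℝ => q ^ x := by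
      have : (fun x : ℝ => q ^ x) = fun x : ℝ => Real.exp (Real.log q * x) :=
        funext fun x => Real.rpow_def_of_pos hq.1 x
      rw [this]
      exact Real.measurable_exp.comp (measurable_const.mul measurable_id)
    exact measurable_const.mul ((measurable_pB2.mul
      (((measurable_const.sub ((measurable_const.sub hqx).const_mul 3)).add
        ((measurable_const.sub hqx).pow_const 2)))).div
      ((measurable_const.sub hqx).pow_const 3))
  · filter_upwards [self_mem_nhdsWithin] with q hq
    filter_upwards [ae_restrict_mem measurableSet_Ioi] with x hx
    rw [Real.norm_eq_abs]
    exact Fq_bound hq hx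
  · exact integrableOn_div_cube 5
  · filter_upwards [ae_restrict_mem measurableSet_Ioi] with x hx
    exact Fq_tendsto hx

/-- The constant `M(q)`. -/
noncomputable def Mq (q : ℝ) : ℝ :=
  q - 1 / 2 + (q / 12) * (Real.log q / (q - 1)) -
    ((1 - q) * (Real.log q) ^ 2 / 2) *
      ∫ x in Set.Ioi (1 : ℝ),
        pB2 x * (2 - 3 * (1 - q ^ x) + (1 - q ^ x) ^ 2) / (1 - q ^ x) ^ 3

theorem tendsto_Mq :
    Tendsto Mq (nhdsWithin 1 (Set.Ioo 0 1)) (nhds Real.eulerMascheroniConstant) := by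
  have hM : ∀ q : ℝ, Mq q = (q - 1/2) + (q/12)*(Real.log q/(q-1)) -
      ∫ x in Ioi (1:ℝ),
        ((1-q)*(Real.log q)^2/2) * (pB2 x * (2 - 3*(1-q^x) + (1-q^x)^2)/(1-q^x)^3) := by
    intro q
    rw [Mq, MeasureTheory.integral_const_mul]
  have hl_n : (𝓝[Ioo (0:ℝ) 1] 1) ≤ 𝓝 (1:ℝ) := nhdsWithin_le_nhds
  have hl_ne : (𝓝[Ioo (0:ℝ) 1] 1) ≤ 𝓝[≠] (1:ℝ) :=
    nhdsWithin_mono 1 (fun q hq => ne_of_lt hq.2)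
  have T1 : Tendsto (fun q : ℝ => q - 1/2) (𝓝[Ioo (0:ℝ) 1] 1) (𝓝 (1 - 1/2)) :=
    ((continuous_id.sub continuous_const).tendsto 1).mono_left hl_n
  have hslope : Tendsto (fun q : ℝ => Real.log q / (q - 1)) (𝓝[≠] (1:ℝ)) (𝓝 1) := by
    have h := (Real.hasDerivAt_log one_ne_zero)
    rw [hasDerivAt_iff_tendsto_slope] at h
    simp only [inv_one] at h
    exact h.congr fun q => by rw [slope_def_field, Real.log_one, sub_zero]
  have T2 : Tendsto (fun q : ℝ => (q/12)*(Real.log q/(q-1))) (𝓝[Ioo (0:ℝ) 1] 1)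
      (𝓝 ((1/12) * 1)) := by
    have h12 : Tendsto (fun q : ℝ => q/12) (𝓝[Ioo (0:ℝ) 1] 1) (𝓝 (1/12)) :=
      ((continuous_id.div_const 12).tendsto 1).mono_left hl_n
    exact h12.mul (hslope.mono_left hl_ne)
  have T3 := tendsto_integral_part
  rw [integral_pB2_value] at T3
  have := (T1.add T2).sub T3
  have hfun : (fun q : ℝ => (q - 1/2) + (q/12)*(Real.log q/(q-1)) -
      ∫ x in Ioi (1:ℝ),
        ((1-q)*(Real.log q)^2/2) * (pB2 x * (2 - 3*(1-q^x) + (1-q^x)^2)/(1-q^x)^3)) = Mq :=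
    funext fun q => (hM q).symm
  rw [hfun] at this
  have hval : (1 - 1/2 + (1/12)*1 - (7/12 - Real.eulerMascheroniConstant))
      = Real.eulerMascheroniConstant := by ring
  rw [hval] at this
  exact this
end
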